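/- Let f(X) := Σ_{i=n-r+1}^{n} σ_i(X)^2 + (1/2)‖A(X) − b‖^2 and g(X,V) := ‖XV‖_F^2 + (1/2)‖A(X) − b‖^2. For every X ∈ R^{m×n} and every V ∈ E(X), the Fréchet subdifferential of f at X is contained in the singleton {∇_X g(X,V)}, i.e. if Z is a Fréchet subgradient of f at X then Z = ∇_X g(X,V). -/

import Mathlib

/-!
By Ky Fan's minimum principle, `‖W V‖_F² ≥ ∑_{i>r} σᵢ(W)²` for every `V` with `n - r`
orthonormal columns, with equality at `W = X` when `V ∈ E(X)`. So the smooth function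
`g(·, V)` majorises `f` and touches it at `X`, and `g(X + H, V)` exceeds
`f X + ⟪∇g, H⟫` only by a quadratic form in `H`. Testing the Fréchet inequality for `Z` along
`H = t (Z - ∇g)`, `t → 0⁺`, gives `‖Z - ∇g‖_F² ≤ 0`.
-/

open Matrix Finset Filter Topology Pointwise

noncomputable section

namespace RankEB

/-- Squared Frobenius norm of a matrix. -/
def frob2 {a b : ℕ} (M : Matrix (Fin a) (Fin b) ℝ) : ℝ := ∑ i, ∑ j, (M i j) ^ 2

/-- Frobenius norm of a matrix. -/
def frob {a b : ℕ} (M : Matrix (Fin a) (Fin b) ℝ) : ℝ := Real.sqrt (frob2 M)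

/-- Trace inner product of matrices. -/
def minner {a b : ℕ} (A B : Matrix (Fin a) (Fin b) ℝ) : ℝ := ∑ i, ∑ j, A i j * B i j

/-- Squared Euclidean norm on `ℝ^l`. -/
def enorm2 {l : ℕ} (v : Fin l → ℝ) : ℝ := ∑ i, (v i) ^ 2

theorem isHermitian_transpose_mul_self {m n : ℕ} (X : Matrix (Fin m) (Fin n) ℝ) :
    (Xᵀ * X).IsHermitian := by
  simpa using Matrix.isHermitian_conjTranspose_mul_self X

/-- Singular values of a real matrix, in nonincreasing order:
`sVal X i = sqrt` of the `i`-th largest eigenvalue of `Xᵀ X`. -/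
def sVal {m n : ℕ} (X : Matrix (Fin m) (Fin n) ℝ) (i : Fin n) : ℝ :=
  Real.sqrt ((isHermitian_transpose_mul_self X).eigenvalues
    (Tuple.sort (isHermitian_transpose_mul_self X).eigenvalues i.rev))

/-- Sum of the squares of the `n - r` smallest singular values of `X`,
i.e. `∑_{i=r+1}^{n} σ_i(X)^2` (1-indexed with `σ₁ ≥ ⋯ ≥ σₙ`). -/
def tailSum {m n : ℕ} (r : ℕ) (X : Matrix (Fin m) (Fin n) ℝ) : ℝ :=
  ∑ i ∈ Finset.univ.filter (fun i : Fin n => r ≤ (i : ℕ)), (sVal X i) ^ 2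


/-- Fréchet subgradient of `f` at `X`, w.r.t. the Frobenius norm and trace inner product. -/
def FSubgrad {m n : ℕ} (f : Matrix (Fin m) (Fin n) ℝ → ℝ) (X Z : Matrix (Fin m) (Fin n) ℝ) : Prop :=
  ∀ ε > (0:ℝ), ∃ δ > (0:ℝ), ∀ H, frob H < δ →
    f (X + H) - f X - minner Z H ≥ -(ε * frob H)

/-- Limiting (Mordukhovich) subgradient of `f` at `X`. -/
def LSubgrad {m n : ℕ} (f : Matrix (Fin m) (Fin n) ℝ → ℝ) (X Z : Matrix (Fin m) (Fin n) ℝ) : Prop :=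
  ∃ Xs Zs : ℕ → Matrix (Fin m) (Fin n) ℝ,
    (∀ k, FSubgrad f (Xs k) (Zs k)) ∧
    Filter.Tendsto (fun k => frob (Xs k - X)) Filter.atTop (nhds 0) ∧
    Filter.Tendsto (fun k => f (Xs k)) Filter.atTop (nhds (f X)) ∧
    Filter.Tendsto (fun k => frob (Zs k - Z)) Filter.atTop (nhds 0)

/-- `m_f(X) = dist(0, ∂f(X))`: minimal Frobenius norm of limiting subgradients. -/
def slopeF {m n : ℕ} (f : Matrix (Fin m) (Fin n) ℝ → ℝ) (X : Matrix (Fin m) (Fin n) ℝ) : ℝ :=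
  sInf {t | ∃ Z, LSubgrad f X Z ∧ t = frob Z}

lemma frob2_nonneg {a b : ℕ} (M : Matrix (Fin a) (Fin b) ℝ) : 0 ≤ frob2 M :=
  sum_nonneg fun _ _ => sum_nonneg fun _ _ => sq_nonneg _

lemma frob2_smul {a b : ℕ} (t : ℝ) (M : Matrix (Fin a) (Fin b) ℝ) :
    frob2 (t • M) = t ^ 2 * frob2 M := by
  simp [frob2, mul_sum, mul_pow]

lemma frob_smul {a b : ℕ} {t : ℝ} (ht : 0 ≤ t) (M : Matrix (Fin a) (Fin b) ℝ) :
    frob (t • M) = t * frob M := by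
  rw [frob, frob2_smul, Real.sqrt_mul (sq_nonneg t), Real.sqrt_sq ht, frob]

lemma eq_zero_of_frob2_nonpos {a b : ℕ} {M : Matrix (Fin a) (Fin b) ℝ} (h : frob2 M ≤ 0) :
    M = 0 := by
  ext i j
  have hrow : ∑ j, M i j ^ 2 = 0 :=
    (sum_eq_zero_iff_of_nonneg fun _ _ => sum_nonneg fun _ _ => sq_nonneg _).1
      (le_antisymm h (frob2_nonneg M)) i (mem_univ i)
  simpa using (sum_eq_zero_iff_of_nonneg fun _ _ => sq_nonneg _).1 hrow j (mem_univ j)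

lemma frob2_eq_trace {a b : ℕ} (M : Matrix (Fin a) (Fin b) ℝ) : frob2 M = trace (Mᵀ * M) := by
  simp only [frob2, trace, Matrix.diag, mul_apply, transpose_apply, sq]
  exact sum_comm

lemma minner_self {a b : ℕ} (M : Matrix (Fin a) (Fin b) ℝ) : minner M M = frob2 M := by
  simp [minner, frob2, sq]

lemma minner_add_left {a b : ℕ} (M N P : Matrix (Fin a) (Fin b) ℝ) :
    minner (M + N) P = minner M P + minner N P := by
  simp [minner, add_mul, sum_add_distrib]

lemma minner_sub_left {a b : ℕ} (M N P : Matrix (Fin a) (Fin b) ℝ) :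
    minner (M - N) P = minner M P - minner N P := by
  simp [minner, sub_mul, sum_sub_distrib]

lemma minner_smul_left {a b : ℕ} (t : ℝ) (M N : Matrix (Fin a) (Fin b) ℝ) :
    minner (t • M) N = t * minner M N := by
  simp [minner, mul_sum, mul_assoc]

lemma minner_smul_right {a b : ℕ} (t : ℝ) (M N : Matrix (Fin a) (Fin b) ℝ) :
    minner M (t • N) = t * minner M N := by
  simp only [minner, Matrix.smul_apply, smul_eq_mul, mul_sum]
  exact sum_congr rfl fun _ _ => sum_congr rfl fun _ _ => by ring

lemma minner_mul_right {a b c : ℕ} (M : Matrix (Fin a) (Fin c) ℝ)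
    (H : Matrix (Fin a) (Fin b) ℝ) (V : Matrix (Fin b) (Fin c) ℝ) :
    minner M (H * V) = minner (M * Vᵀ) H := by
  simp only [minner, mul_apply, transpose_apply, mul_sum, sum_mul]
  refine sum_congr rfl fun _ _ => ?_
  rw [sum_comm]
  exact sum_congr rfl fun _ _ => sum_congr rfl fun _ _ => by ring

lemma frob2_add {a b : ℕ} (M N : Matrix (Fin a) (Fin b) ℝ) :
    frob2 (M + N) = frob2 M + 2 * minner M N + frob2 N := by
  simp only [frob2, minner, Matrix.add_apply, mul_sum, ← sum_add_distrib]
  exact sum_congr rfl fun _ _ => sum_congr rfl fun _ _ => by ring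

lemma enorm2_smul {l : ℕ} (t : ℝ) (v : Fin l → ℝ) : enorm2 (t • v) = t ^ 2 * enorm2 v := by
  simp [enorm2, mul_sum, mul_pow]

lemma enorm2_add {l : ℕ} (u v : Fin l → ℝ) :
    enorm2 (u + v) = enorm2 u + 2 * ∑ i, u i * v i + enorm2 v := by
  simp only [enorm2, Pi.add_apply, mul_sum, ← sum_add_distrib]
  exact sum_congr rfl fun _ _ => by ring

section Orthonormal

variable {ι κ : Type*} [Fintype ι] [Fintype κ]

lemma trace_transpose_mul_diagonal_mul [DecidableEq ι] (P : Matrix ι κ ℝ) (d : ι → ℝ) :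
    trace (Pᵀ * diagonal d * P) = ∑ i, d i * ∑ j, P i j ^ 2 := by
  simp only [trace, Matrix.diag, mul_apply, transpose_apply, diagonal_apply, mul_ite, mul_zero,
    sum_ite_eq', mem_univ, if_true, mul_sum]
  rw [sum_comm]
  exact sum_congr rfl fun _ _ => sum_congr rfl fun _ _ => by ring

variable [DecidableEq κ] {P : Matrix ι κ ℝ}

lemma sum_sum_sq_of_transpose_mul_self_eq_one (hP : Pᵀ * P = 1) :
    ∑ i, ∑ j, P i j ^ 2 = Fintype.card κ := by
  have := congrArg trace hP
  simp only [trace, Matrix.diag, mul_apply, transpose_apply, one_apply_eq, sum_const, card_univ,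
    nsmul_eq_mul, mul_one] at this
  rw [sum_comm, ← this]
  simp [sq]

/-- `Q = P Pᵀ` is an orthogonal projection, so `Q i i = ∑ₖ (Q i k)² ≥ (Q i i)²`. -/
lemma sum_sq_row_le_one_of_transpose_mul_self_eq_one (hP : Pᵀ * P = 1) (i : ι) :
    ∑ j, P i j ^ 2 ≤ 1 := by
  set Q := P * Pᵀ
  have hQQ : Q * Q = Q := by
    rw [Matrix.mul_assoc, ← Matrix.mul_assoc Pᵀ, hP, Matrix.one_mul]
  have hQii : Q i i = ∑ j, P i j ^ 2 := by simp [Q, mul_apply, sq]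
  have hQsymm : Qᵀ = Q := by simp [Q, transpose_mul]
  have hdiag : Q i i = ∑ k, Q i k ^ 2 := by
    conv_lhs => rw [← hQQ]
    simp only [mul_apply, sq]
    exact sum_congr rfl fun k _ => by rw [← transpose_apply Q k i, hQsymm]
  have hle : Q i i ^ 2 ≤ Q i i :=
    hdiag ▸ single_le_sum (fun k _ => sq_nonneg (Q i k)) (mem_univ i)
  nlinarith [sum_nonneg fun j (_ : j ∈ univ) => sq_nonneg (P i j)]

end Orthonormal

lemma sum_lt_le_sum_mul_of_monotone {n k : ℕ} {μ c : Fin n → ℝ} (hμ : Monotone μ)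
    (hc0 : ∀ i, 0 ≤ c i) (hc1 : ∀ i, c i ≤ 1) (hc : ∑ i, c i = k) :
    ∑ i ∈ univ.filter (fun i : Fin n => (i : ℕ) < k), μ i ≤ ∑ i, μ i * c i := by
  have hkn : k ≤ n := by
    have : (k : ℝ) ≤ n := hc ▸ (sum_le_sum fun i _ => hc1 i).trans (by simp)
    exact_mod_cast this
  -- `t` separates the first `k` values of `μ` from the others, so that every term of
  -- `∑ (μ i - t) (c i - e i)` is nonnegative, where `e` is the indicator of `i < k`.
  obtain ⟨t, hlo, hhi⟩ : ∃ t, (∀ i : Fin n, (i : ℕ) < k → μ i ≤ t) ∧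
      (∀ i : Fin n, ¬ (i : ℕ) < k → t ≤ μ i) := by
    by_cases hk : k < n
    · exact ⟨μ ⟨k, hk⟩, fun i hi => hμ (Fin.le_def.2 hi.le),
        fun i hi => hμ (Fin.le_def.2 (by simp; omega))⟩
    · exact ⟨∑ i, |μ i|, fun i _ => (le_abs_self _).trans
        (single_le_sum (fun j _ => abs_nonneg (μ j)) (mem_univ i)),
        fun i hi => absurd i.isLt (by omega)⟩
  set e : Fin n → ℝ := fun i => if (i : ℕ) < k then 1 else 0
  have he : ∑ i, e i = k := by
    simp [e, sum_boole, Fin.card_filter_val_lt, hkn]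
  have hterm : ∀ i, 0 ≤ (μ i - t) * (c i - e i) := by
    intro i
    by_cases hi : (i : ℕ) < k
    · have := hlo i hi; have := hc1 i; simp only [e, hi, if_true]; nlinarith
    · have := hhi i hi; have := hc0 i; simp only [e, hi, if_false]; nlinarith
  have hsum : ∑ i ∈ univ.filter (fun i : Fin n => (i : ℕ) < k), μ i = ∑ i, μ i * e i := by
    rw [sum_filter]
    exact sum_congr rfl fun i _ => by split_ifs <;> simp [e, *]
  have := sum_nonneg fun i (_ : i ∈ univ) => hterm i
  simp only [sub_mul, mul_sub, sum_sub_distrib, ← mul_sum, hc, he] at this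
  linarith

section Spectral

variable {ι κ : Type*} [Fintype ι] [DecidableEq ι] [Fintype κ] {S : Matrix ι ι ℝ}

lemma star_eigenvectorUnitary_eq_transpose (hS : S.IsHermitian) :
    star (hS.eigenvectorUnitary : Matrix ι ι ℝ) = (hS.eigenvectorUnitary : Matrix ι ι ℝ)ᵀ := by
  rw [star_eq_conjTranspose, conjTranspose_eq_transpose_of_trivial]

lemma trace_transpose_mul_mul_eq_sum_eigenvalues (hS : S.IsHermitian) (V : Matrix ι κ ℝ) :
    trace (Vᵀ * S * V) = ∑ i, hS.eigenvalues i *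
      ∑ j, ((hS.eigenvectorUnitary : Matrix ι ι ℝ)ᵀ * V) i j ^ 2 := by
  set U : Matrix ι ι ℝ := (hS.eigenvectorUnitary : Matrix ι ι ℝ)
  have hSU : S = U * diagonal hS.eigenvalues * Uᵀ := by
    conv_lhs => rw [hS.spectral_theorem, Unitary.conjStarAlgAut_apply]
    rw [star_eigenvectorUnitary_eq_transpose]
    rfl
  rw [← trace_transpose_mul_diagonal_mul, transpose_mul, transpose_transpose]
  conv_lhs => rw [hSU]
  simp only [Matrix.mul_assoc]

end Spectral

/-- Ky Fan's minimum principle. In an eigenbasis, `trace (Vᵀ S V) = ∑ λᵢ cᵢ` with weights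
`cᵢ ∈ [0, 1]` summing to `k`. -/
lemma sum_sort_eigenvalues_le_trace_transpose_mul_mul {n k : ℕ} {S : Matrix (Fin n) (Fin n) ℝ}
    (hS : S.IsHermitian) {V : Matrix (Fin n) (Fin k) ℝ} (hV : Vᵀ * V = 1) :
    ∑ i ∈ univ.filter (fun i : Fin n => (i : ℕ) < k), hS.eigenvalues (Tuple.sort hS.eigenvalues i)
      ≤ trace (Vᵀ * S * V) := by
  set U : Matrix (Fin n) (Fin n) ℝ := (hS.eigenvectorUnitary : Matrix (Fin n) (Fin n) ℝ)
  set σ := Tuple.sort hS.eigenvalues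
  set c : Fin n → ℝ := fun i => ∑ j, (Uᵀ * V) i j ^ 2
  have hP : (Uᵀ * V)ᵀ * (Uᵀ * V) = 1 := by
    rw [transpose_mul, transpose_transpose, Matrix.mul_assoc, ← Matrix.mul_assoc U,
      ← star_eigenvectorUnitary_eq_transpose, mem_unitaryGroup_iff.1 hS.eigenvectorUnitary.2,
      Matrix.one_mul, hV]
  calc _ ≤ ∑ i, hS.eigenvalues (σ i) * c (σ i) :=
        sum_lt_le_sum_mul_of_monotone (Tuple.monotone_sort hS.eigenvalues)
          (fun _ => sum_nonneg fun _ _ => sq_nonneg _)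
          (fun _ => sum_sq_row_le_one_of_transpose_mul_self_eq_one hP _)
          (by rw [Equiv.sum_comp σ c, sum_sum_sq_of_transpose_mul_self_eq_one hP, Fintype.card_fin])
    _ = _ := by
      rw [trace_transpose_mul_mul_eq_sum_eigenvalues hS V,
        Equiv.sum_comp σ (fun i => hS.eigenvalues i * c i)]

lemma tailSum_eq_sum_sort_eigenvalues {m n : ℕ} (r : ℕ) (W : Matrix (Fin m) (Fin n) ℝ) :
    tailSum r W = ∑ i ∈ univ.filter (fun i : Fin n => (i : ℕ) < n - r),
      (isHermitian_transpose_mul_self W).eigenvalues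
        (Tuple.sort (isHermitian_transpose_mul_self W).eigenvalues i) := by
  refine sum_nbij' Fin.rev Fin.rev ?_ ?_ (fun a _ => Fin.rev_rev a) (fun a _ => Fin.rev_rev a) ?_
  · intro a ha
    simp only [mem_filter, mem_univ, true_and, Fin.val_rev] at ha ⊢
    omega
  · intro a ha
    simp only [mem_filter, mem_univ, true_and, Fin.val_rev] at ha ⊢
    omega
  · intro a _
    exact Real.sq_sqrt (eigenvalues_conjTranspose_mul_self_nonneg W _)

lemma tailSum_le_frob2_mul {m n r : ℕ} (W : Matrix (Fin m) (Fin n) ℝ)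
    {V : Matrix (Fin n) (Fin (n - r)) ℝ} (hV : Vᵀ * V = 1) :
    tailSum r W ≤ frob2 (W * V) := by
  rw [tailSum_eq_sum_sort_eigenvalues, frob2_eq_trace, transpose_mul, Matrix.mul_assoc,
    ← Matrix.mul_assoc Wᵀ, ← Matrix.mul_assoc]
  exact sum_sort_eigenvalues_le_trace_transpose_mul_mul _ hV

section Subgradient

variable {m n : ℕ} {f : Matrix (Fin m) (Fin n) ℝ → ℝ} {X Z : Matrix (Fin m) (Fin n) ℝ}

lemma FSubgrad.minner_le_of_le_add_sq (hZ : FSubgrad f X Z) {H : Matrix (Fin m) (Fin n) ℝ}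
    {a C : ℝ} (hf : ∀ t > 0, f (X + t • H) ≤ f X + t * a + t ^ 2 * C) : minner Z H ≤ a := by
  have hε : ∀ ε > 0, minner Z H ≤ a + ε * frob H := by
    intro ε hε
    obtain ⟨δ, hδ, hZδ⟩ := hZ ε hε
    have hsmall : ∀ᶠ t in 𝓝[>] (0 : ℝ), t * frob H < δ := by
      have : Tendsto (fun t : ℝ => t * frob H) (𝓝 0) (𝓝 0) :=
        Continuous.tendsto' (by fun_prop) 0 0 (zero_mul _)
      exact (this.mono_left nhdsWithin_le_nhds).eventually (gt_mem_nhds hδ)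
    refine ge_of_tendsto (x := 𝓝[>] (0 : ℝ)) (f := fun t => a + t * C + ε * frob H) ?_ ?_
    · exact (Continuous.tendsto' (by fun_prop) 0 _ (by simp)).mono_left nhdsWithin_le_nhds
    filter_upwards [hsmall, self_mem_nhdsWithin] with t htδ (ht : 0 < t)
    have hlow := hZδ (t • H) (by rwa [frob_smul ht.le])
    rw [frob_smul ht.le, minner_smul_right] at hlow
    have := hf t ht
    refine le_of_mul_le_mul_left ?_ ht
    linarith
  exact ge_of_tendsto (x := 𝓝[>] (0 : ℝ))
    ((Continuous.tendsto' (by fun_prop) 0 a (by simp)).mono_left nhdsWithin_le_nhds)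
    (eventually_nhdsWithin_of_forall hε)

lemma FSubgrad.eq_of_le_add_quadratic (hZ : FSubgrad f X Z) {G : Matrix (Fin m) (Fin n) ℝ}
    {q : Matrix (Fin m) (Fin n) ℝ → ℝ} (hq : ∀ (t : ℝ) H, q (t • H) = t ^ 2 * q H)
    (hf : ∀ H, f (X + H) ≤ f X + minner G H + q H) : Z = G := by
  have hle : minner Z (Z - G) ≤ minner G (Z - G) :=
    hZ.minner_le_of_le_add_sq fun t _ => by
      simpa only [minner_smul_right, hq] using hf (t • (Z - G))
  rw [← sub_eq_zero]
  exact eq_zero_of_frob2_nonpos (by rw [← minner_self, minner_sub_left]; linarith)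

end Subgradient

lemma tailSum_add_le {m n r : ℕ} {X : Matrix (Fin m) (Fin n) ℝ}
    {V : Matrix (Fin n) (Fin (n - r)) ℝ} (hV : Vᵀ * V = 1) (hE : frob2 (X * V) = tailSum r X)
    (H : Matrix (Fin m) (Fin n) ℝ) :
    tailSum r (X + H) ≤ tailSum r X + minner ((2 : ℝ) • (X * V * Vᵀ)) H + frob2 (H * V) :=
  calc tailSum r (X + H) ≤ frob2 ((X + H) * V) := tailSum_le_frob2_mul _ hV
    _ = _ := by rw [Matrix.add_mul, frob2_add, hE, minner_smul_left, ← minner_mul_right]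

lemma half_enorm2_add_sub {m n l : ℕ} (A : Matrix (Fin m) (Fin n) ℝ →ₗ[ℝ] (Fin l → ℝ))
    (b : Fin l → ℝ) {Aadj : (Fin l → ℝ) → Matrix (Fin m) (Fin n) ℝ}
    (hadj : ∀ W y, minner (Aadj y) W = ∑ i, A W i * y i) (X H : Matrix (Fin m) (Fin n) ℝ) :
    1 / 2 * enorm2 (A (X + H) - b)
      = 1 / 2 * enorm2 (A X - b) + minner (Aadj (A X - b)) H + 1 / 2 * enorm2 (A H) := by
  rw [hadj, map_add, add_sub_right_comm, enorm2_add]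
  simp only [mul_comm (A H _)]
  ring

theorem stmt6_general (m n r l : ℕ)
    (A : Matrix (Fin m) (Fin n) ℝ →ₗ[ℝ] (Fin l → ℝ)) (b : Fin l → ℝ)
    (Aadj : (Fin l → ℝ) → Matrix (Fin m) (Fin n) ℝ)
    (hadj : ∀ (W : Matrix (Fin m) (Fin n) ℝ) (y : Fin l → ℝ),
      minner (Aadj y) W = ∑ i, A W i * y i)
    (X : Matrix (Fin m) (Fin n) ℝ) (V : Matrix (Fin n) (Fin (n - r)) ℝ)
    (hV : Vᵀ * V = 1) (hE : frob2 (X * V) = tailSum r X)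
    (Z : Matrix (Fin m) (Fin n) ℝ)
    (hZ : FSubgrad (fun W => tailSum r W + (1 / 2) * enorm2 (A W - b)) X Z) :
    Z = (2 : ℝ) • (X * V * Vᵀ) + Aadj (A X - b) := by
  refine hZ.eq_of_le_add_quadratic (q := fun H => frob2 (H * V) + 1 / 2 * enorm2 (A H))
    (fun t H => ?_) (fun H => ?_)
  · simp only [Matrix.smul_mul, frob2_smul, map_smul, enorm2_smul]
    ring
  · have := tailSum_add_le hV hE H
    rw [minner_add_left, half_enorm2_add_sub A b hadj]
    linarith

/-- for `V ∈ E(X)`, any Fréchet subgradient `Z` of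
`f(X) = Σ tail σ² + (1/2)‖A X - b‖²` at `X` equals
`∇_X g(X,V) = 2 X V Vᵀ + A*(A X - b)`. -/
theorem stmt6 (m n r l : ℕ) (hmn : n ≤ m) (hr : r ≤ n)
    (A : Matrix (Fin m) (Fin n) ℝ →ₗ[ℝ] (Fin l → ℝ)) (b : Fin l → ℝ)
    (Aadj : (Fin l → ℝ) → Matrix (Fin m) (Fin n) ℝ)
    (hadj : ∀ (W : Matrix (Fin m) (Fin n) ℝ) (y : Fin l → ℝ),
      minner (Aadj y) W = ∑ i, A W i * y i)
    (X : Matrix (Fin m) (Fin n) ℝ) (V : Matrix (Fin n) (Fin (n - r)) ℝ)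
    (hV : Vᵀ * V = 1) (hE : frob2 (X * V) = tailSum r X)
    (Z : Matrix (Fin m) (Fin n) ℝ)
    (hZ : FSubgrad (fun W => tailSum r W + (1 / 2) * enorm2 (A W - b)) X Z) :
    Z = (2 : ℝ) • (X * V * Vᵀ) + Aadj (A X - b) :=
  stmt6_general m n r l A b Aadj hadj X V hV hE Z hZ

end RankEB
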